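/- Consider the trace regression model: n independent pairs (X_i, Y_i), i = 1,...,n, where each X_i is a random m1×m2 real matrix, Y_i is a real random variable, and E(Y_i | X_i) = tr(X_i^T A_0) for an unknown matrix A_0 ∈ R^{m1×m2}. Let 𝔸 ⊆ R^{m1×m2} be any set of matrices and let Â^λ be a minimizer over A ∈ 𝔸 of L_n(A) = ||A||²_{L2(Π)} − ⟨(2/n)Σ_{i=1}^n Y_i X_i, A⟩ + λ||A||₁. If λ ≥ 2||M||_∞, where M = (1/n)Σ_{i=1}^n (Y_i X_i − E(Y_i X_i)), then ||Â^λ − A_0||²_{L2(Π)} ≤ inf_{A ∈ 𝔸} [ ||A − A_0||²_{L2(Π)} + 2λ||A||₁ ]. -/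

import Mathlib

open MeasureTheory ProbabilityTheory Matrix Real
open scoped ENNReal NNReal BigOperators

noncomputable section

instance {m1 m2 : ℕ} : MeasurableSpace (Matrix (Fin m1) (Fin m2) ℝ) :=
  (inferInstance : MeasurableSpace (Fin m1 → Fin m2 → ℝ))

/-- Trace inner product `⟨A,B⟩ = tr(AᵀB)`. -/
def tip {m1 m2 : ℕ} (A B : Matrix (Fin m1) (Fin m2) ℝ) : ℝ := (Aᵀ * B).trace

/-- Frobenius norm `‖A‖₂`. -/
def frob {m1 m2 : ℕ} (A : Matrix (Fin m1) (Fin m2) ℝ) : ℝ :=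
  Real.sqrt (∑ i, ∑ j, (A i j) ^ 2)

/-- Singular values (unordered): square roots of the eigenvalues of `AᴴA`. -/
def sval {m1 m2 : ℕ} (A : Matrix (Fin m1) (Fin m2) ℝ) (j : Fin m2) : ℝ :=
  Real.sqrt ((show (Aᵀ * A).IsHermitian from by
    simpa using Matrix.isHermitian_conjTranspose_mul_self A).eigenvalues j)

/-- Nuclear norm `‖A‖₁`: sum of singular values. -/
def nuc {m1 m2 : ℕ} (A : Matrix (Fin m1) (Fin m2) ℝ) : ℝ := ∑ j, sval A j

/-- Operator (spectral) norm `‖A‖_∞`. -/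
def opnorm {m1 m2 : ℕ} (A : Matrix (Fin m1) (Fin m2) ℝ) : ℝ :=
  ‖LinearMap.toContinuousLinearMap (Matrix.toEuclideanLin A)‖

/-- Squared `L₂(Π)`-norm: `‖A‖²_{L₂(Π)} = (1/n) ∑ᵢ E⟨A, Xᵢ⟩²`. -/
def l2sq {Ω : Type*} [MeasurableSpace Ω] (μ : Measure Ω) {n m1 m2 : ℕ}
    (X : Fin n → Ω → Matrix (Fin m1) (Fin m2) ℝ) (A : Matrix (Fin m1) (Fin m2) ℝ) : ℝ :=
  (1 / (n : ℝ)) * ∑ i, ∫ ω, (tip A (X i ω)) ^ 2 ∂μ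

/-- The matrix `E(Yᵢ Xᵢ)` (entrywise expectation). -/
def meanYX {Ω : Type*} [MeasurableSpace Ω] (μ : Measure Ω) {n m1 m2 : ℕ}
    (X : Fin n → Ω → Matrix (Fin m1) (Fin m2) ℝ) (Y : Fin n → Ω → ℝ) (i : Fin n) :
    Matrix (Fin m1) (Fin m2) ℝ :=
  Matrix.of fun j k => ∫ ω, Y i ω * X i ω j k ∂μ

/-- The stochastic error matrix `M = (1/n) ∑ᵢ (Yᵢ Xᵢ − E(Yᵢ Xᵢ))`. -/
def errM {Ω : Type*} [MeasurableSpace Ω] (μ : Measure Ω) {n m1 m2 : ℕ}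
    (X : Fin n → Ω → Matrix (Fin m1) (Fin m2) ℝ) (Y : Fin n → Ω → ℝ) (ω : Ω) :
    Matrix (Fin m1) (Fin m2) ℝ :=
  (n : ℝ)⁻¹ • ∑ i, (Y i ω • X i ω - meanYX μ X Y i)

/-- The penalized objective `L_n(A) = ‖A‖²_{L₂(Π)} − ⟨(2/n)∑ᵢYᵢXᵢ, A⟩ + λ‖A‖₁`. -/
def Ln {Ω : Type*} [MeasurableSpace Ω] (μ : Measure Ω) {n m1 m2 : ℕ}
    (X : Fin n → Ω → Matrix (Fin m1) (Fin m2) ℝ) (Y : Fin n → Ω → ℝ) (lam : ℝ)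
    (A : Matrix (Fin m1) (Fin m2) ℝ) (ω : Ω) : ℝ :=
  l2sq μ X A - tip ((2 / (n : ℝ)) • ∑ i, Y i ω • X i ω) A + lam * nuc A

/-- Matrix of the orthogonal projection onto a subspace of `ℝ^d`. -/
def projMat {d : ℕ} (K : Submodule ℝ (EuclideanSpace ℝ (Fin d))) : Matrix (Fin d) (Fin d) ℝ :=
  Matrix.toEuclideanLin.symm (K.subtype ∘ₗ (K.orthogonalProjectionOnto).toLinearMap)

/-- Column space of `A` (the span of its left singular vectors `S₁`). -/
def colSpan {m1 m2 : ℕ} (A : Matrix (Fin m1) (Fin m2) ℝ) :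
    Submodule ℝ (EuclideanSpace ℝ (Fin m1)) := LinearMap.range (Matrix.toEuclideanLin A)

/-- Row space of `A` (the span of its right singular vectors `S₂`). -/
def rowSpan {m1 m2 : ℕ} (A : Matrix (Fin m1) (Fin m2) ℝ) :
    Submodule ℝ (EuclideanSpace ℝ (Fin m2)) := LinearMap.range (Matrix.toEuclideanLin Aᵀ)

/-- `𝒫_A^⊥(B) = P_{S₁ᗮ} B P_{S₂ᗮ}` where `(S₁, S₂)` is the support of `A`. -/
def Pperp {m1 m2 : ℕ} (A B : Matrix (Fin m1) (Fin m2) ℝ) : Matrix (Fin m1) (Fin m2) ℝ :=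
  projMat (colSpan A)ᗮ * B * projMat (rowSpan A)ᗮ

/-- `𝒫_A(B) = B - P_{S₁ᗮ} B P_{S₂ᗮ}`. -/
def calP {m1 m2 : ℕ} (A B : Matrix (Fin m1) (Fin m2) ℝ) : Matrix (Fin m1) (Fin m2) ℝ :=
  B - Pperp A B

/-- The uniform distribution on the matrix completion basis
`𝒳 = {eⱼ(m₁) eₖ(m₂)ᵀ}`. -/
def unifX (m1 m2 : ℕ) : Measure (Matrix (Fin m1) (Fin m2) ℝ) :=
  ((m1 * m2 : ℝ≥0∞))⁻¹ •
    ∑ j : Fin m1, ∑ k : Fin m2, Measure.dirac (Matrix.single j k (1 : ℝ))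

/-- The matrix `𝐗 = (m₁m₂/n) ∑ᵢ Yᵢ Xᵢ`. -/
def hatX {Ω : Type*} {n m1 m2 : ℕ} (X : Fin n → Ω → Matrix (Fin m1) (Fin m2) ℝ)
    (Y : Fin n → Ω → ℝ) (ω : Ω) : Matrix (Fin m1) (Fin m2) ℝ :=
  ((m1 * m2 : ℝ) / (n : ℝ)) • ∑ i, Y i ω • X i ω

/-- The matrix-completion objective `‖A − B‖₂² + λ m₁m₂ ‖A‖₁`. -/
def Fobj {m1 m2 : ℕ} (lam : ℝ) (B A : Matrix (Fin m1) (Fin m2) ℝ) : ℝ :=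
  frob (A - B) ^ 2 + lam * (m1 * m2 : ℝ) * nuc A

/-! Since `E(Yᵢ | Xᵢ) = ⟨A₀, Xᵢ⟩`, the tower property gives `E(YᵢXᵢ) = E(⟨A₀, Xᵢ⟩Xᵢ)`, and
expanding the square turns the objective into
`L_n(A) = ‖A − A₀‖²_{L₂(Π)} − ‖A₀‖²_{L₂(Π)} − 2⟨M, A⟩ + λ‖A‖₁`.
Hence `L_n(Â) ≤ L_n(A)` bounds `‖Â − A₀‖²_{L₂(Π)} − ‖A − A₀‖²_{L₂(Π)}` by
`2⟨M, Â⟩ − 2⟨M, A⟩ + λ‖A‖₁ − λ‖Â‖₁`, and the trace duality `|⟨M, B⟩| ≤ ‖M‖_∞ ‖B‖₁` together with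
`λ ≥ 2‖M‖_∞` absorbs both noise terms. The duality is read off in an orthonormal eigenbasis `(vⱼ)`
of `BᵀB`: there `⟨M, B⟩ = ∑ⱼ ⟨Mvⱼ, Bvⱼ⟩` and `‖Bvⱼ‖` is the `j`-th singular value of `B`. -/

section
variable {m1 m2 : ℕ}

lemma tip_eq_sum (A B : Matrix (Fin m1) (Fin m2) ℝ) :
    tip A B = ∑ j, ∑ k, A j k * B j k := by
  simp only [tip, Matrix.trace, Matrix.diag, Matrix.mul_apply, Matrix.transpose_apply]
  exact Finset.sum_comm

lemma tip_comm (A B : Matrix (Fin m1) (Fin m2) ℝ) : tip A B = tip B A := by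
  rw [tip, ← Matrix.trace_transpose, Matrix.transpose_mul, Matrix.transpose_transpose, tip]

lemma tip_add_left (A B C : Matrix (Fin m1) (Fin m2) ℝ) :
    tip (A + B) C = tip A C + tip B C := by
  simp [tip, Matrix.add_mul]

lemma tip_sub_left (A B C : Matrix (Fin m1) (Fin m2) ℝ) :
    tip (A - B) C = tip A C - tip B C := by
  simp [tip, Matrix.sub_mul]

lemma tip_neg_left (A C : Matrix (Fin m1) (Fin m2) ℝ) : tip (-A) C = -tip A C := by
  simp [tip]

lemma tip_smul_left (c : ℝ) (A C : Matrix (Fin m1) (Fin m2) ℝ) :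
    tip (c • A) C = c * tip A C := by
  simp [tip]

lemma tip_sum_left {ι : Type*} (s : Finset ι) (A : ι → Matrix (Fin m1) (Fin m2) ℝ)
    (C : Matrix (Fin m1) (Fin m2) ℝ) : tip (∑ i ∈ s, A i) C = ∑ i ∈ s, tip (A i) C := by
  simp [tip, Matrix.transpose_sum, Matrix.sum_mul, Matrix.trace_sum]

lemma measurable_tip (C : Matrix (Fin m1) (Fin m2) ℝ) : Measurable (tip C) := by
  simp_rw [funext (tip_eq_sum C)]
  fun_prop

lemma opnorm_neg (M : Matrix (Fin m1) (Fin m2) ℝ) : opnorm (-M) = opnorm M := by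
  rw [opnorm, opnorm, map_neg, map_neg, norm_neg]

lemma nuc_nonneg (A : Matrix (Fin m1) (Fin m2) ℝ) : 0 ≤ nuc A :=
  Finset.sum_nonneg fun _ _ => Real.sqrt_nonneg _

open scoped InnerProductSpace

lemma inner_toEuclideanLin_toEuclideanLin (M B : Matrix (Fin m1) (Fin m2) ℝ)
    (v w : EuclideanSpace ℝ (Fin m2)) :
    ⟪toEuclideanLin M v, toEuclideanLin B w⟫_ℝ = ⟪v, toEuclideanLin (Mᵀ * B) w⟫_ℝ := by
  rw [Matrix.toLpLin_mul_same, LinearMap.comp_apply,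
    ← Matrix.conjTranspose_eq_transpose_of_trivial,
    Matrix.toEuclideanLin_conjTranspose_eq_adjoint, LinearMap.adjoint_inner_right]

lemma tip_eq_sum_inner (M B : Matrix (Fin m1) (Fin m2) ℝ)
    (b : OrthonormalBasis (Fin m2) ℝ (EuclideanSpace ℝ (Fin m2))) :
    tip M B = ∑ j, ⟪toEuclideanLin M (b j), toEuclideanLin B (b j)⟫_ℝ := by
  rw [tip, ← Matrix.trace_toLin_eq _ (EuclideanSpace.basisFun (Fin m2) ℝ).toBasis,
    LinearMap.trace_eq_sum_inner _ b]
  simp_rw [inner_toEuclideanLin_toEuclideanLin]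
  rfl

lemma norm_toEuclideanLin_eigenvectorBasis (B : Matrix (Fin m1) (Fin m2) ℝ)
    (hB : (Bᵀ * B).IsHermitian) (j : Fin m2) :
    ‖toEuclideanLin B (hB.eigenvectorBasis j)‖ = sval B j := by
  have heig : toEuclideanLin (Bᵀ * B) (hB.eigenvectorBasis j) =
      hB.eigenvalues j • hB.eigenvectorBasis j := by
    rw [Matrix.toLpLin_apply, hB.mulVec_eigenvectorBasis]
    rfl
  rw [sval, ← Real.sqrt_sq (norm_nonneg _), ← real_inner_self_eq_norm_sq,
    inner_toEuclideanLin_toEuclideanLin, heig, real_inner_smul_right,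
    real_inner_self_eq_norm_sq, (hB.eigenvectorBasis).norm_eq_one, one_pow, mul_one]

lemma tip_le_opnorm_mul_nuc (M B : Matrix (Fin m1) (Fin m2) ℝ) :
    tip M B ≤ opnorm M * nuc B := by
  have hB : (Bᵀ * B).IsHermitian := by
    simpa using Matrix.isHermitian_conjTranspose_mul_self B
  set v := hB.eigenvectorBasis
  rw [tip_eq_sum_inner M B v, nuc, Finset.mul_sum]
  refine Finset.sum_le_sum fun j _ => ?_
  calc ⟪toEuclideanLin M (v j), toEuclideanLin B (v j)⟫_ℝ
      ≤ ‖toEuclideanLin M (v j)‖ * ‖toEuclideanLin B (v j)‖ := real_inner_le_norm _ _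
    _ ≤ opnorm M * sval B j := by
      rw [← norm_toEuclideanLin_eigenvectorBasis B hB j]
      refine mul_le_mul_of_nonneg_right ?_ (norm_nonneg _)
      simpa [opnorm, v.norm_eq_one] using
        (LinearMap.toContinuousLinearMap (toEuclideanLin M)).le_opNorm (v j)

lemma two_mul_abs_tip_le {M : Matrix (Fin m1) (Fin m2) ℝ} {lam : ℝ} (hlam : 2 * opnorm M ≤ lam)
    (B : Matrix (Fin m1) (Fin m2) ℝ) : 2 * |tip M B| ≤ lam * nuc B := by
  have hM := tip_le_opnorm_mul_nuc M B
  have hnegM := tip_le_opnorm_mul_nuc (-M) B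
  rw [tip_neg_left, opnorm_neg] at hnegM
  have hlam' := mul_le_mul_of_nonneg_right hlam (nuc_nonneg B)
  linarith [abs_le'.2 ⟨hM, hnegM⟩]
end

section
variable {Ω : Type*} {m0 : MeasurableSpace Ω} {μ : Measure Ω}

lemma integrable_mul_of_integrable_sq {f g : Ω → ℝ} (hf : Integrable (fun ω => f ω ^ 2) μ)
    (hg : Integrable (fun ω => g ω ^ 2) μ) (hfg : Integrable (fun ω => (f ω + g ω) ^ 2) μ) :
    Integrable (fun ω => f ω * g ω) μ := by
  have hpolar : (fun ω => f ω * g ω) = fun ω => ((f ω + g ω) ^ 2 - f ω ^ 2 - g ω ^ 2) / 2 := by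
    funext ω; ring
  rw [hpolar]
  exact ((hfg.sub hf).sub hg).div_const 2

lemma integral_sub_sq {f g : Ω → ℝ} (hf : Integrable (fun ω => f ω ^ 2) μ)
    (hg : Integrable (fun ω => g ω ^ 2) μ) (hfg : Integrable (fun ω => g ω * f ω) μ) :
    ∫ ω, (f ω - g ω) ^ 2 ∂μ
      = ∫ ω, f ω ^ 2 ∂μ - 2 * ∫ ω, g ω * f ω ∂μ + ∫ ω, g ω ^ 2 ∂μ := by
  have hexp : (fun ω => (f ω - g ω) ^ 2) = fun ω => f ω ^ 2 - 2 * (g ω * f ω) + g ω ^ 2 := by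
    funext ω; ring
  have hf2g : Integrable (fun ω => f ω ^ 2 - 2 * (g ω * f ω)) μ := hf.sub (hfg.const_mul 2)
  rw [hexp, integral_add hf2g hg, integral_sub hf (hfg.const_mul 2), integral_const_mul]

lemma integral_mul_eq_of_condExp_ae_eq {m : MeasurableSpace Ω} (hm : m ≤ m0)
    [SigmaFinite (μ.trim hm)] {f g Z : Ω → ℝ} (hZ : StronglyMeasurable[m] Z)
    (hf : Integrable f μ) (hZf : Integrable (fun ω => Z ω * f ω) μ) (hfg : μ[f | m] =ᵐ[μ] g) :
    ∫ ω, Z ω * f ω ∂μ = ∫ ω, Z ω * g ω ∂μ := by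
  rw [← integral_condExp hm]
  refine integral_congr_ae ?_
  filter_upwards [condExp_mul_of_stronglyMeasurable_left hZ hZf hf, hfg] with ω hpull hω
  exact hpull.trans (congrArg (Z ω * ·) hω)

variable {m1 m2 : ℕ} {F : Ω → Matrix (Fin m1) (Fin m2) ℝ}

lemma integrable_tip_left (hF : ∀ j k, Integrable (fun ω => F ω j k) μ)
    (C : Matrix (Fin m1) (Fin m2) ℝ) : Integrable (fun ω => tip (F ω) C) μ := by
  simp_rw [tip_eq_sum]
  exact integrable_finsetSum _ fun j _ => integrable_finsetSum _ fun k _ => (hF j k).mul_const _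

lemma integral_tip_left (hF : ∀ j k, Integrable (fun ω => F ω j k) μ)
    (C : Matrix (Fin m1) (Fin m2) ℝ) :
    ∫ ω, tip (F ω) C ∂μ = tip (Matrix.of fun j k => ∫ ω, F ω j k ∂μ) C := by
  have hFC : ∀ j k, Integrable (fun ω => F ω j k * C j k) μ := fun j k => (hF j k).mul_const _
  simp_rw [tip_eq_sum, Matrix.of_apply, ← integral_mul_const]
  rw [integral_finsetSum]
  · refine Finset.sum_congr rfl fun j _ => integral_finsetSum _ fun k _ => hFC j k
  · exact fun j _ => integrable_finsetSum _ fun k _ => hFC j k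
end

/-- The inner product `⟨C, D⟩_{L₂(Π)}` whose quadratic form is `l2sq`. -/
def l2inner {Ω : Type*} [MeasurableSpace Ω] (μ : Measure Ω) {n m1 m2 : ℕ}
    (X : Fin n → Ω → Matrix (Fin m1) (Fin m2) ℝ) (C D : Matrix (Fin m1) (Fin m2) ℝ) : ℝ :=
  (1 / (n : ℝ)) * ∑ i, ∫ ω, tip C (X i ω) * tip D (X i ω) ∂μ

section
variable {Ω : Type*} [MeasurableSpace Ω] {μ : Measure Ω} {n m1 m2 : ℕ}
  {X : Fin n → Ω → Matrix (Fin m1) (Fin m2) ℝ} {Y : Fin n → Ω → ℝ}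

lemma l2sq_sub (hL2int : ∀ A i, Integrable (fun ω => tip A (X i ω) ^ 2) μ)
    (C D : Matrix (Fin m1) (Fin m2) ℝ) :
    l2sq μ X (C - D) = l2sq μ X C - 2 * l2inner μ X D C + l2sq μ X D := by
  have hDC : ∀ i, Integrable (fun ω => tip D (X i ω) * tip C (X i ω)) μ := fun i =>
    integrable_mul_of_integrable_sq (hL2int D i) (hL2int C i)
      (by simpa only [tip_add_left] using hL2int (D + C) i)
  simp only [l2sq, l2inner, tip_sub_left]
  simp_rw [integral_sub_sq (hL2int C _) (hL2int D _) (hDC _), Finset.sum_add_distrib,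
    Finset.sum_sub_distrib, ← Finset.mul_sum]
  ring

lemma tip_meanYX [IsFiniteMeasure μ] {A0 : Matrix (Fin m1) (Fin m2) ℝ} {i : Fin n}
    (hX : Measurable (X i)) (hY : Integrable (Y i) μ)
    (hYX : ∀ j k, Integrable (fun ω => Y i ω * X i ω j k) μ)
    (hmodel : μ[Y i | MeasurableSpace.comap (X i) inferInstance] =ᵐ[μ] fun ω => tip A0 (X i ω))
    (C : Matrix (Fin m1) (Fin m2) ℝ) :
    tip (meanYX μ X Y i) C = ∫ ω, tip A0 (X i ω) * tip C (X i ω) ∂μ := by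
  have hYXC : ∀ ω, tip (Y i ω • X i ω) C = tip C (X i ω) * Y i ω := fun ω => by
    rw [tip_smul_left, tip_comm, mul_comm]
  have hCX : StronglyMeasurable[MeasurableSpace.comap (X i) inferInstance]
      (fun ω => tip C (X i ω)) :=
    ((measurable_tip C).comp (comap_measurable (X i))).stronglyMeasurable
  calc tip (meanYX μ X Y i) C = ∫ ω, tip (Y i ω • X i ω) C ∂μ := (integral_tip_left hYX C).symm
    _ = ∫ ω, tip C (X i ω) * Y i ω ∂μ := by simp_rw [hYXC]
    _ = ∫ ω, tip C (X i ω) * tip A0 (X i ω) ∂μ := by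
      refine integral_mul_eq_of_condExp_ae_eq hX.comap_le hCX hY ?_ hmodel
      simpa only [hYXC] using integrable_tip_left (F := fun ω => Y i ω • X i ω) hYX C
    _ = ∫ ω, tip A0 (X i ω) * tip C (X i ω) ∂μ := by simp_rw [mul_comm]

lemma Ln_eq [IsFiniteMeasure μ] {A0 : Matrix (Fin m1) (Fin m2) ℝ}
    (hX : ∀ i, Measurable (X i)) (hY : ∀ i, Integrable (Y i) μ)
    (hYX : ∀ i j k, Integrable (fun ω => Y i ω * X i ω j k) μ)
    (hmodel : ∀ i, μ[Y i | MeasurableSpace.comap (X i) inferInstance]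
      =ᵐ[μ] fun ω => tip A0 (X i ω))
    (hL2int : ∀ A i, Integrable (fun ω => tip A (X i ω) ^ 2) μ)
    (lam : ℝ) (C : Matrix (Fin m1) (Fin m2) ℝ) (ω : Ω) :
    Ln μ X Y lam C ω
      = l2sq μ X (C - A0) - l2sq μ X A0 - 2 * tip (errM μ X Y ω) C + lam * nuc C := by
  simp only [Ln, errM, l2sq_sub hL2int, l2inner, tip_smul_left, tip_sum_left, tip_sub_left,
    tip_meanYX (hX _) (hY _) (hYX _) (hmodel _), Finset.sum_sub_distrib]
  ring
end

theorem trace_regression_oracle_slow_rate_general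
    {Ω : Type*} [MeasurableSpace Ω] (μ : Measure Ω) [IsProbabilityMeasure μ]
    {n m1 m2 : ℕ}
    (X : Fin n → Ω → Matrix (Fin m1) (Fin m2) ℝ) (Y : Fin n → Ω → ℝ)
    (hXmeas : ∀ i, Measurable (X i))
    (A0 : Matrix (Fin m1) (Fin m2) ℝ)
    -- the trace regression model: E(Yᵢ | Xᵢ) = tr(Xᵢᵀ A₀)
    (hmodel : ∀ i, μ[Y i | MeasurableSpace.comap (X i) inferInstance]
        =ᵐ[μ] fun ω => tip A0 (X i ω))
    -- regularity: all expectations involved exist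
    (hYint : ∀ i, Integrable (Y i) μ)
    (hYXint : ∀ i j k, Integrable (fun ω => Y i ω * X i ω j k) μ)
    (hL2int : ∀ (A : Matrix (Fin m1) (Fin m2) ℝ) (i : Fin n),
      Integrable (fun ω => (tip A (X i ω)) ^ 2) μ)
    (𝔸 : Set (Matrix (Fin m1) (Fin m2) ℝ)) (lam : ℝ)
    (Ahat : Matrix (Fin m1) (Fin m2) ℝ) (ω : Ω)
    -- Â realizes the minimum of L_n over 𝔸 (at the observed data ω)
    (hAhatmin : ∀ A ∈ 𝔸, Ln μ X Y lam Ahat ω ≤ Ln μ X Y lam A ω)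
    -- λ ≥ 2‖M‖_∞
    (hlam : 2 * opnorm (errM μ X Y ω) ≤ lam) :
    ∀ A ∈ 𝔸, l2sq μ X (Ahat - A0) ≤ l2sq μ X (A - A0) + 2 * lam * nuc A := by
  intro A hA
  have hmin := hAhatmin A hA
  simp only [Ln_eq hXmeas hYint hYXint hmodel hL2int] at hmin
  have hnoiseAhat := two_mul_abs_tip_le hlam Ahat
  have hnoiseA := two_mul_abs_tip_le hlam A
  linarith [le_abs_self (tip (errM μ X Y ω) Ahat), neg_abs_le (tip (errM μ X Y ω) A)]

/-- Theorem 1, first oracle inequality: in the trace regression model, if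
`λ ≥ 2‖M‖_∞` then the nuclear norm penalized estimator satisfies the "slow rate" sharp oracle
inequality `‖Â − A₀‖²_{L₂(Π)} ≤ inf_{A ∈ 𝔸} [‖A − A₀‖²_{L₂(Π)} + 2λ‖A‖₁]`. -/
theorem trace_regression_oracle_slow_rate
    {Ω : Type*} [MeasurableSpace Ω] (μ : Measure Ω) [IsProbabilityMeasure μ]
    {n m1 m2 : ℕ} (hn : 0 < n)
    (X : Fin n → Ω → Matrix (Fin m1) (Fin m2) ℝ) (Y : Fin n → Ω → ℝ)
    (hXmeas : ∀ i, Measurable (X i)) (hYmeas : ∀ i, Measurable (Y i))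
    -- the pairs (Xᵢ, Yᵢ) are independent
    (hindep : iIndepFun (fun i ω => (X i ω, Y i ω)) μ)
    (A0 : Matrix (Fin m1) (Fin m2) ℝ)
    -- the trace regression model: E(Yᵢ | Xᵢ) = tr(Xᵢᵀ A₀)
    (hmodel : ∀ i, μ[Y i | MeasurableSpace.comap (X i) inferInstance]
        =ᵐ[μ] fun ω => tip A0 (X i ω))
    -- regularity: all expectations involved exist
    (hYint : ∀ i, Integrable (Y i) μ)
    (hYXint : ∀ i j k, Integrable (fun ω => Y i ω * X i ω j k) μ)
    (hA0Xint : ∀ i j k, Integrable (fun ω => tip A0 (X i ω) * X i ω j k) μ)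
    (hL2int : ∀ (A : Matrix (Fin m1) (Fin m2) ℝ) (i : Fin n),
      Integrable (fun ω => (tip A (X i ω)) ^ 2) μ)
    (𝔸 : Set (Matrix (Fin m1) (Fin m2) ℝ)) (lam : ℝ)
    (Ahat : Matrix (Fin m1) (Fin m2) ℝ) (ω : Ω)
    -- Â realizes the minimum of L_n over 𝔸 (at the observed data ω)
    (hAhatmem : Ahat ∈ 𝔸)
    (hAhatmin : ∀ A ∈ 𝔸, Ln μ X Y lam Ahat ω ≤ Ln μ X Y lam A ω)
    -- λ ≥ 2‖M‖_∞
    (hlam : 2 * opnorm (errM μ X Y ω) ≤ lam) :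
    ∀ A ∈ 𝔸, l2sq μ X (Ahat - A0) ≤ l2sq μ X (A - A0) + 2 * lam * nuc A :=
  trace_regression_oracle_slow_rate_general μ X Y hXmeas A0 hmodel hYint hYXint hL2int 𝔸 lam Ahat ω
    hAhatmin hlam

end
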